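/- arXiv:2511.14743 — 5 statements merged into one kernel-verified Lean document; each statement's English description precedes it below -/
import Mathlib

section
/- Let U and F be measurable spaces, let μ (the prior p(u)) and ν (the variational distribution q(u)) be probability measures on U with ν absolutely continuous with respect to μ, let K be a Markov kernel from U to F (the conditional p(f | u)), and let L : F → ℝ be measurable with L(f) > 0 for all f (the likelihood p(Y | f)). Define the evidence p(Y) = ∫_U (∫_F L(f) K(u)(df)) μ(du). Assume: (i) p(Y) is finite; (ii) for ν-almost every u, L is integrable with respect to K(u) and log ∘ L is integrable with respect to K(u); (iii) u ↦ ∫_F log L(f) K(u)(df) is integrable with respect to ν; and (iv) KL(ν‖μ) is finite. Then log p(Y) ≥ ∫_U ∫_F log L(f) K(u)(df) ν(du) − KL(ν‖μ), i.e., log p(Y) ≥ E_{q(f)}[log p(Y | f)] − KL(q(u)‖p(u)) where q(f) = ∫ p(f | u) q(u) du. (Theorem 1, the evidence lower bound (ELBO) for the latent GP model.) -/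
/-!
Put `H u = ∫ L dK(u)`, so that `p(Y) = ∫ H dμ`, and `φ u = ∫ log L dK(u)`. Jensen's inequality
for the convex function `exp` under `K u` gives `exp φ ≤ H`. The rest is the Gibbs variational
inequality: with `D = dν/dμ`, Jensen under `ν` applied to `φ - log D` gives
`exp (∫ φ dν - KL(ν‖μ)) ≤ ∫ exp φ / D dν ≤ ∫ H / D dν ≤ ∫ H dμ`.
-/

open MeasureTheory ProbabilityTheory
open scoped ENNReal

/-- The Kullback–Leibler divergence `KL(ν‖μ) = ∫ log (dν/dμ) dν` of two measures, expressed
via the Radon–Nikodym derivative. -/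
noncomputable def klDivergence {U : Type*} [MeasurableSpace U] (ν μ : Measure U) : ℝ :=
  ∫ u, Real.log ((ν.rnDeriv μ u).toReal) ∂ν

open Real

theorem exp_integral_le_integral_exp {α : Type*} [MeasurableSpace α] {μ : Measure α}
    [IsProbabilityMeasure μ] {φ : α → ℝ} (hφ : Integrable φ μ)
    (hexp : Integrable (fun x => exp (φ x)) μ) :
    exp (∫ x, φ x ∂μ) ≤ ∫ x, exp (φ x) ∂μ :=
  convexOn_exp.map_integral_le continuous_exp.continuousOn isClosed_univ
    (.of_forall fun _ => Set.mem_univ _) hφ hexp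

theorem integral_sub_klDivergence_le_log_lintegral {U : Type*} [MeasurableSpace U]
    {μ ν : Measure U} [SigmaFinite μ] [IsProbabilityMeasure ν] (hνμ : ν ≪ μ)
    {g : U → ℝ≥0∞} (hg : AEMeasurable g μ) (hg_fin : ∫⁻ u, g u ∂μ ≠ ∞)
    {φ : U → ℝ} (hφ : Integrable φ ν) (hφg : ∀ᵐ u ∂ν, exp (φ u) ≤ (g u).toReal)
    (hKL : Integrable (fun u => log (ν.rnDeriv μ u).toReal) ν) :
    ∫ u, φ u ∂ν - klDivergence ν μ ≤ log (∫⁻ u, g u ∂μ).toReal := by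
  set D := ν.rnDeriv μ
  set ψ := fun u => φ u - log (D u).toReal
  have hψ : Integrable ψ ν := hφ.sub hKL
  have hgD_meas : AEMeasurable (fun u => g u / D u) μ :=
    hg.div (Measure.measurable_rnDeriv ν μ).aemeasurable
  have hgD_le : ∫⁻ u, g u / D u ∂ν ≤ ∫⁻ u, g u ∂μ := calc
    ∫⁻ u, g u / D u ∂ν = ∫⁻ u, D u * (g u / D u) ∂μ :=
      (lintegral_rnDeriv_mul hνμ hgD_meas).symm
    _ ≤ ∫⁻ u, g u ∂μ := lintegral_mono fun _ => ENNReal.mul_div_le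
  have hgD_fin : ∫⁻ u, g u / D u ∂ν ≠ ∞ := ne_top_of_le_ne_top hg_fin hgD_le
  have hgD_int : Integrable (fun u => (g u / D u).toReal) ν :=
    integrable_toReal_of_lintegral_ne_top (hgD_meas.mono_ac hνμ) hgD_fin
  have hexp_le : ∀ᵐ u ∂ν, exp (ψ u) ≤ (g u / D u).toReal := by
    filter_upwards [hφg, Measure.rnDeriv_pos hνμ, hνμ.ae_le (Measure.rnDeriv_lt_top ν μ)]
      with u hu hD_pos hD_lt
    rw [exp_sub, exp_log (ENNReal.toReal_pos hD_pos.ne' hD_lt.ne), ENNReal.toReal_div]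
    gcongr
  have hexp_int : Integrable (fun u => exp (ψ u)) ν :=
    hgD_int.mono' hψ.aemeasurable.exp.aestronglyMeasurable <| by
      filter_upwards [hexp_le] with u hu
      rwa [norm_of_nonneg (exp_pos _).le]
  have hexp_le_lintegral : ∫ u, exp (ψ u) ∂ν ≤ (∫⁻ u, g u ∂μ).toReal := calc
    ∫ u, exp (ψ u) ∂ν ≤ ∫ u, (g u / D u).toReal ∂ν := integral_mono_ae hexp_int hgD_int hexp_le
    _ = (∫⁻ u, g u / D u ∂ν).toReal :=
      integral_toReal (hgD_meas.mono_ac hνμ) (ae_lt_top' (hgD_meas.mono_ac hνμ) hgD_fin)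
    _ ≤ (∫⁻ u, g u ∂μ).toReal := ENNReal.toReal_mono hg_fin hgD_le
  have hpos : 0 < (∫⁻ u, g u ∂μ).toReal :=
    (integral_exp_pos hexp_int).trans_le hexp_le_lintegral
  rw [klDivergence, ← integral_sub hφ hKL, le_log_iff_exp_le hpos]
  exact (exp_integral_le_integral_exp hψ hexp_int).trans hexp_le_lintegral

/-- Theorem 1 (evidence lower bound, ELBO, for the latent GP model): let `μ` be the prior
`p(u)` and `ν` the variational distribution `q(u)` on `U` with `ν ≪ μ`, let `K` be a Markov
kernel from `U` to `F` (the conditional `p(f | u)`), and let `L` be a measurable, positive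
likelihood `f ↦ p(Y | f)`. Define the evidence
`p(Y) = ∫_U ∫_F L(f) K(u)(df) μ(du)` (as a Lebesgue integral of the nonnegative `L`).
Assume (i) `p(Y)` is finite; (ii) for `ν`-a.e. `u`, `L` and `log ∘ L` are integrable with
respect to `K(u)`; (iii) `u ↦ ∫ log L dK(u)` is `ν`-integrable; and (iv) `KL(ν‖μ)` is finite
(the log of the Radon–Nikodym derivative is `ν`-integrable). Then
`log p(Y) ≥ ∫_U ∫_F log L(f) K(u)(df) ν(du) − KL(ν‖μ)`, i.e.
`log p(Y) ≥ E_{q(f)}[log p(Y | f)] − KL(q(u)‖p(u))` where `q(f) = ∫ p(f | u) q(u) du`. -/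
theorem elbo_latent_gp {U F : Type*} [MeasurableSpace U] [MeasurableSpace F]
    (μ ν : Measure U) [IsProbabilityMeasure μ] [IsProbabilityMeasure ν] (hνμ : ν ≪ μ)
    (K : Kernel U F) [IsMarkovKernel K]
    (L : F → ℝ) (hL_meas : Measurable L) (hL_pos : ∀ f, 0 < L f)
    (hpY_fin : (∫⁻ u, ∫⁻ f, ENNReal.ofReal (L f) ∂(K u) ∂μ) ≠ ∞)
    (hL_int : ∀ᵐ u ∂ν, Integrable L (K u) ∧ Integrable (fun f => Real.log (L f)) (K u))
    (hlogL_int : Integrable (fun u => ∫ f, Real.log (L f) ∂(K u)) ν)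
    (hKL_fin : Integrable (fun u => Real.log ((ν.rnDeriv μ u).toReal)) ν) :
    Real.log (∫⁻ u, ∫⁻ f, ENNReal.ofReal (L f) ∂(K u) ∂μ).toReal ≥
      (∫ u, ∫ f, Real.log (L f) ∂(K u) ∂ν) - klDivergence ν μ := by
  have hexp_log : ∀ f, exp (log (L f)) = L f := fun f => exp_log (hL_pos f)
  refine integral_sub_klDivergence_le_log_lintegral hνμ
    hL_meas.ennreal_ofReal.lintegral_kernel.aemeasurable hpY_fin hlogL_int ?_ hKL_fin
  filter_upwards [hL_int] with u ⟨hL, hlogL⟩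
  calc exp (∫ f, log (L f) ∂(K u)) ≤ ∫ f, exp (log (L f)) ∂(K u) :=
        exp_integral_le_integral_exp hlogL (by simpa only [hexp_log] using hL)
    _ = ∫ f, L f ∂(K u) := by simp only [hexp_log]
    _ = (∫⁻ f, ENNReal.ofReal (L f) ∂(K u)).toReal :=
        integral_eq_lintegral_of_nonneg_ae (.of_forall fun f => (hL_pos f).le)
          hL_meas.aestronglyMeasurable
end

section
/- The exponential kernel is positive semidefinite: for every n ∈ ℕ, every choice of time points t₁, …, tₙ ∈ ℝ, every choice of real coefficients c₁, …, cₙ, and all parameters σ > 0 and ρ > 0, it holds that ∑_{i=1}^{n} ∑_{j=1}^{n} c_i c_j · σ² · exp(−|t_i − t_j| / ρ) ≥ 0. -/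
/-!
Writing `u = s/ρ`, `v = t/ρ`, one has `exp (-|u - v|) = e^{-u} e^{-v} min (e^{2u}) (e^{2v})`, so the
exponential kernel is a rescaling of the Brownian-motion kernel `min a b` on `a, b ≥ 0`. The latter
is a Gram kernel: `min a b = ∫ 1_{(0,a)} 1_{(0,b)}`, so its quadratic form is `∫ (∑ cᵢ 1_{(0,aᵢ)})² ≥ 0`.
-/

open MeasureTheory Set

theorem sum_sum_mul_integral_mul_nonneg {α ι : Type*} [MeasurableSpace α] [Fintype ι]
    {μ : Measure α} (f : ι → α → ℝ) (hf : ∀ i j, Integrable (fun x => f i x * f j x) μ)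
    (c : ι → ℝ) : 0 ≤ ∑ i, ∑ j, c i * c j * ∫ x, f i x * f j x ∂μ := by
  have hsq : ∀ x, (∑ i, c i * f i x) ^ 2 = ∑ i, ∑ j, c i * c j * (f i x * f j x) := by
    intro x
    rw [sq, Finset.sum_mul_sum]
    exact Finset.sum_congr rfl fun i _ => Finset.sum_congr rfl fun j _ => by ring
  calc 0 ≤ ∫ x, (∑ i, c i * f i x) ^ 2 ∂μ := integral_nonneg fun x => sq_nonneg _
    _ = _ := by
      simp_rw [hsq]
      rw [integral_finsetSum _ fun i _ => integrable_finsetSum _ fun j _ => (hf i j).const_mul _]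
      refine Finset.sum_congr rfl fun i _ => ?_
      rw [integral_finsetSum _ fun j _ => (hf i j).const_mul _]
      simp_rw [integral_const_mul]

theorem indicator_Ioo_mul_indicator_Ioo (a b : ℝ) :
    (Ioo 0 a).indicator 1 * (Ioo 0 b).indicator 1 = (Ioo 0 (min a b)).indicator (1 : ℝ → ℝ) := by
  rw [← inter_indicator_one, Ioo_inter_Ioo, max_self]

theorem integrable_indicator_Ioo_mul_indicator_Ioo (a b : ℝ) :
    Integrable (fun x => (Ioo 0 a).indicator 1 x * (Ioo 0 b).indicator (1 : ℝ → ℝ) x) := by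
  rw [← Pi.mul_def, indicator_Ioo_mul_indicator_Ioo]
  exact (integrable_indicator_iff measurableSet_Ioo).2 (integrableOn_const measure_Ioo_lt_top.ne)

theorem integral_indicator_Ioo_mul_indicator_Ioo {a b : ℝ} (ha : 0 ≤ a) (hb : 0 ≤ b) :
    ∫ x, (Ioo 0 a).indicator 1 x * (Ioo 0 b).indicator (1 : ℝ → ℝ) x = min a b := by
  rw [← Pi.mul_def, indicator_Ioo_mul_indicator_Ioo, integral_indicator_one measurableSet_Ioo,
    Real.volume_real_Ioo_of_le (le_min ha hb), sub_zero]

theorem min_kernel_posSemidef {ι : Type*} [Fintype ι] (a c : ι → ℝ) (ha : ∀ i, 0 ≤ a i) :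
    0 ≤ ∑ i, ∑ j, c i * c j * min (a i) (a j) := by
  simpa only [integral_indicator_Ioo_mul_indicator_Ioo (ha _) (ha _)] using
    sum_sum_mul_integral_mul_nonneg (fun i => (Ioo 0 (a i)).indicator 1)
      (fun i j => integrable_indicator_Ioo_mul_indicator_Ioo (a i) (a j)) c

theorem Real.exp_neg_abs_sub (u v : ℝ) :
    exp (-|u - v|) = exp (-u) * exp (-v) * min (exp (2 * u)) (exp (2 * v)) := by
  rw [← exp_monotone.map_min, ← exp_add, ← exp_add]
  congr 1
  rcases le_total u v with h | h
  · rw [min_eq_left (by linarith), abs_of_nonpos (by linarith)]; ring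
  · rw [min_eq_right (by linarith), abs_of_nonneg (by linarith)]; ring

theorem exponential_kernel_posSemidef_general (n : ℕ) (t : Fin n → ℝ) (c : Fin n → ℝ)
    (σ ρ : ℝ) (hρ : 0 < ρ) :
    0 ≤ ∑ i : Fin n, ∑ j : Fin n,
      c i * c j * (σ ^ 2 * Real.exp (-|t i - t j| / ρ)) := by
  have hkernel : ∀ i j, c i * c j * (σ ^ 2 * Real.exp (-|t i - t j| / ρ)) =
      (σ * c i * Real.exp (-(t i / ρ))) * (σ * c j * Real.exp (-(t j / ρ))) *
        min (Real.exp (2 * (t i / ρ))) (Real.exp (2 * (t j / ρ))) := by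
    intro i j
    have hscale : |t i - t j| / ρ = |t i / ρ - t j / ρ| := by
      rw [← sub_div, abs_div, abs_of_pos hρ]
    rw [neg_div, hscale, Real.exp_neg_abs_sub]
    ring
  simp_rw [hkernel]
  exact min_kernel_posSemidef _ _ fun i => (Real.exp_pos _).le

/-- The exponential kernel `k(s,t) = σ² · exp(−|s−t|/ρ)` with amplitude `σ > 0` and
characteristic length scale `ρ > 0` is positive semidefinite. -/
theorem exponential_kernel_posSemidef (n : ℕ) (t : Fin n → ℝ) (c : Fin n → ℝ)
    (σ ρ : ℝ) (hσ : 0 < σ) (hρ : 0 < ρ) :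
    0 ≤ ∑ i : Fin n, ∑ j : Fin n,
      c i * c j * (σ ^ 2 * Real.exp (-|t i - t j| / ρ)) :=
  exponential_kernel_posSemidef_general n t c σ ρ hρ
end

section
/- The squared exponential (SE) kernel is positive semidefinite: for every n ∈ ℕ, every choice of time points t₁, …, tₙ ∈ ℝ, every choice of real coefficients c₁, …, cₙ, and all parameters σ > 0 and ℓ > 0, it holds that ∑_{i=1}^{n} ∑_{j=1}^{n} c_i c_j · σ² · exp(−(t_i − t_j)² / (2ℓ²)) ≥ 0. -/
/-!
Completing the square, `exp (-γ (s - t)²) = exp (-γ s²) · exp (-γ t²) · exp (2γ s t)`, so the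
Gaussian kernel is the kernel `exp (x y)` evaluated at `x = √(2γ) s`, `y = √(2γ) t` and rescaled by
`f(s) f(t)`. Expanding `exp (x y)` in its power series writes its quadratic form as
`∑ₖ (∑ᵢ aᵢ xᵢᵏ)² / k!`, a sum of squares.
-/

open Real Finset

theorem Real.hasSum_pow_div_factorial_exp (x : ℝ) :
    HasSum (fun k : ℕ => x ^ k / k.factorial) (exp x) := by
  rw [exp_eq_exp_ℝ]
  exact NormedSpace.expSeries_div_hasSum_exp x

section

variable {ι : Type*} [Fintype ι]

theorem hasSum_sum_sum_mul_mul_exp_mul (a x : ι → ℝ) :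
    HasSum (fun k : ℕ => (∑ i, a i * x i ^ k) ^ 2 / k.factorial)
      (∑ i, ∑ j, a i * a j * exp (x i * x j)) := by
  refine (hasSum_sum fun i _ => hasSum_sum fun j _ =>
    (hasSum_pow_div_factorial_exp (x i * x j)).mul_left (a i * a j)).congr_fun fun k => ?_
  simp only [sq, sum_mul_sum, sum_div]
  exact sum_congr rfl fun i _ => sum_congr rfl fun j _ => by ring

theorem sum_sum_mul_mul_exp_mul_nonneg (a x : ι → ℝ) :
    0 ≤ ∑ i, ∑ j, a i * a j * exp (x i * x j) :=
  (hasSum_sum_sum_mul_mul_exp_mul a x).nonneg fun _ => by positivity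

theorem exp_neg_mul_sub_sq {γ : ℝ} (hγ : 0 ≤ γ) (s t : ℝ) :
    exp (-γ * (s - t) ^ 2) =
      exp (-γ * s ^ 2) * exp (-γ * t ^ 2) * exp (√(2 * γ) * s * (√(2 * γ) * t)) := by
  have hsq : √(2 * γ) * s * (√(2 * γ) * t) = 2 * γ * s * t := by
    rw [mul_mul_mul_comm, mul_self_sqrt (by positivity)]
    ring
  rw [hsq, ← exp_add, ← exp_add]
  ring_nf

theorem sum_sum_mul_mul_exp_neg_mul_sub_sq_nonneg {γ : ℝ} (hγ : 0 ≤ γ) (c t : ι → ℝ) :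
    0 ≤ ∑ i, ∑ j, c i * c j * exp (-γ * (t i - t j) ^ 2) := by
  convert sum_sum_mul_mul_exp_mul_nonneg (fun i => c i * exp (-γ * t i ^ 2))
    (fun i => √(2 * γ) * t i) using 3 with i _ j _
  rw [exp_neg_mul_sub_sq hγ]
  ring

end

theorem squared_exponential_kernel_posSemidef_general (n : ℕ) (t : Fin n → ℝ) (c : Fin n → ℝ)
    (σ ℓ : ℝ) :
    0 ≤ ∑ i : Fin n, ∑ j : Fin n,
      c i * c j * (σ ^ 2 * Real.exp (-(t i - t j) ^ 2 / (2 * ℓ ^ 2))) := by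
  have hγ : 0 ≤ (2 * ℓ ^ 2)⁻¹ := by positivity
  have hgauss := sum_sum_mul_mul_exp_neg_mul_sub_sq_nonneg hγ c t
  calc (0 : ℝ) ≤ σ ^ 2 * ∑ i, ∑ j, c i * c j * exp (-(2 * ℓ ^ 2)⁻¹ * (t i - t j) ^ 2) :=
        mul_nonneg (sq_nonneg σ) hgauss
    _ = _ := by
      simp only [mul_sum]
      refine sum_congr rfl fun i _ => sum_congr rfl fun j _ => ?_
      rw [neg_mul, neg_div, div_eq_inv_mul]
      ring

/-- The squared exponential (SE) kernel `k(s,t) = σ² · exp(−(s−t)²/(2ℓ²))` with amplitude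
`σ > 0` and length scale `ℓ > 0` is positive semidefinite. -/
theorem squared_exponential_kernel_posSemidef (n : ℕ) (t : Fin n → ℝ) (c : Fin n → ℝ)
    (σ ℓ : ℝ) (hσ : 0 < σ) (hℓ : 0 < ℓ) :
    0 ≤ ∑ i : Fin n, ∑ j : Fin n,
      c i * c j * (σ ^ 2 * Real.exp (-(t i - t j) ^ 2 / (2 * ℓ ^ 2))) :=
  squared_exponential_kernel_posSemidef_general n t c σ ℓ
end

section
/- The rational quadratic kernel is positive semidefinite: for every n ∈ ℕ, every choice of time points t₁, …, tₙ ∈ ℝ, every choice of real coefficients c₁, …, cₙ, and all parameters σ > 0, α > 0, and ℓ > 0, it holds that ∑_{i=1}^{n} ∑_{j=1}^{n} c_i c_j · σ² · (1 + (t_i − t_j)² / (2αℓ²))^{−α} ≥ 0. -/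
/-!
The kernel `(s, t) ↦ cos ((s - t) x)` is positive semidefinite, its quadratic form being
`(∑ cᵢ cos (tᵢ x))² + (∑ cᵢ sin (tᵢ x))²`; averaging over `x` shows that the real part of any
characteristic function is a positive semidefinite function of `s - t`, and the Gaussian
`exp (-a d²)` is such a real part, for the centred normal law of variance `2a`. Finally the Gamma integral
`r ^ (-α) = Γ(α)⁻¹ ∫₀^∞ s ^ (α - 1) e ^ (-r s) ds` with `r = 1 + b d²` writes the rational
quadratic kernel as a nonnegative mixture of Gaussian kernels `exp (-b s d²)`.
-/

open MeasureTheory ProbabilityTheory Real Set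

def IsPosSemidefFun (f : ℝ → ℝ) : Prop :=
  ∀ (n : ℕ) (t c : Fin n → ℝ), 0 ≤ ∑ i, ∑ j, c i * c j * f (t i - t j)

namespace IsPosSemidefFun

theorem const_mul {f : ℝ → ℝ} (hf : IsPosSemidefFun f) {a : ℝ} (ha : 0 ≤ a) :
    IsPosSemidefFun fun d => a * f d := by
  intro n t c
  have h : ∑ i, ∑ j, c i * c j * (a * f (t i - t j)) =
      a * ∑ i, ∑ j, c i * c j * f (t i - t j) := by
    simp only [Finset.mul_sum]
    exact Finset.sum_congr rfl fun i _ => Finset.sum_congr rfl fun j _ => by ring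
  rw [h]
  exact mul_nonneg ha (hf n t c)

theorem integral {X : Type*} [MeasurableSpace X] {μ : Measure X} {F : X → ℝ → ℝ}
    (hF : ∀ᵐ x ∂μ, IsPosSemidefFun (F x)) (hF_int : ∀ d, Integrable (fun x => F x d) μ) :
    IsPosSemidefFun fun d => ∫ x, F x d ∂μ := by
  intro n t c
  have h : ∑ i, ∑ j, c i * c j * ∫ x, F x (t i - t j) ∂μ =
      ∫ x, ∑ i, ∑ j, c i * c j * F x (t i - t j) ∂μ := by
    rw [integral_finsetSum _ fun i _ =>
      integrable_finsetSum _ fun j _ => (hF_int _).const_mul _]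
    simp only [integral_finsetSum _ fun j _ => (hF_int _).const_mul _, integral_const_mul]
  rw [h]
  exact integral_nonneg_of_ae (hF.mono fun x hx => hx n t c)

end IsPosSemidefFun

theorem isPosSemidefFun_cos_mul (x : ℝ) : IsPosSemidefFun fun d => cos (d * x) := by
  intro n t c
  have h : ∑ i, ∑ j, c i * c j * cos ((t i - t j) * x) =
      (∑ i, c i * cos (t i * x)) ^ 2 + (∑ i, c i * sin (t i * x)) ^ 2 := by
    simp only [sq, Finset.sum_mul_sum, ← Finset.sum_add_distrib, sub_mul, cos_sub]
    exact Finset.sum_congr rfl fun i _ => Finset.sum_congr rfl fun j _ => by ring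
  rw [h]
  positivity

theorem re_charFun_eq_integral_cos {μ : Measure ℝ} [IsFiniteMeasure μ] (d : ℝ) :
    (charFun μ d).re = ∫ x, cos (d * x) ∂μ := by
  have h_int : Integrable (fun x : ℝ => Complex.exp (d * x * Complex.I)) μ := by
    refine (integrable_const (1 : ℝ)).mono (by fun_prop) (.of_forall fun x => ?_)
    simp [← Complex.ofReal_mul, Complex.norm_exp_ofReal_mul_I]
  rw [charFun_apply_real]
  refine (integral_re h_int).symm.trans (integral_congr_ae (.of_forall fun x => ?_))
  exact_mod_cast Complex.exp_ofReal_mul_I_re (d * x)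

theorem isPosSemidefFun_re_charFun (μ : Measure ℝ) [IsFiniteMeasure μ] :
    IsPosSemidefFun fun d => (charFun μ d).re := by
  simp_rw [re_charFun_eq_integral_cos]
  refine IsPosSemidefFun.integral (.of_forall isPosSemidefFun_cos_mul) fun d => ?_
  exact (integrable_const 1).mono' (by fun_prop) (.of_forall fun x => abs_cos_le_one _)

theorem isPosSemidefFun_exp_neg_mul_sq {a : ℝ} (ha : 0 ≤ a) :
    IsPosSemidefFun fun d => exp (-a * d ^ 2) := by
  let v : NNReal := ⟨2 * a, by positivity⟩
  have h_eq (d : ℝ) : (charFun (gaussianReal 0 v) d).re = exp (-a * d ^ 2) := by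
    have h_exponent : (d : ℂ) * ((0 : ℝ) : ℂ) * Complex.I - ((v : ℝ) : ℂ) * (d : ℂ) ^ 2 / 2 =
        ((-a * d ^ 2 : ℝ) : ℂ) := by
      rw [show (v : ℝ) = 2 * a from rfl]
      push_cast
      ring
    rw [charFun_gaussianReal, h_exponent, ← Complex.ofReal_exp, Complex.ofReal_re]
  simpa only [h_eq] using isPosSemidefFun_re_charFun (gaussianReal 0 v)

theorem isPosSemidefFun_one_add_mul_sq_rpow_neg {b α : ℝ} (hb : 0 ≤ b) (hα : 0 < α) :
    IsPosSemidefFun fun d => (1 + b * d ^ 2) ^ (-α) := by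
  have h_eq (d : ℝ) : (1 + b * d ^ 2) ^ (-α) =
      (Gamma α)⁻¹ * ∫ s in Ioi 0, s ^ (α - 1) * exp (-((1 + b * d ^ 2) * s)) := by
    rw [integral_rpow_mul_exp_neg_mul_Ioi hα (by positivity), one_div,
      inv_rpow (by positivity), ← rpow_neg (by positivity)]
    field_simp [(Gamma_pos_of_pos hα).ne']
  simp_rw [h_eq]
  refine .const_mul (.integral ?_ fun d => ?_) (inv_nonneg.2 (Gamma_pos_of_pos hα).le)
  · filter_upwards [ae_restrict_mem measurableSet_Ioi] with s (hs : 0 < s)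
    have h_mix (d : ℝ) : s ^ (α - 1) * exp (-((1 + b * d ^ 2) * s)) =
        s ^ (α - 1) * exp (-s) * exp (-(b * s) * d ^ 2) := by
      rw [mul_assoc, ← exp_add]
      ring_nf
    simp_rw [h_mix]
    exact (isPosSemidefFun_exp_neg_mul_sq (by positivity)).const_mul (by positivity)
  · refine (integrableOn_rpow_mul_exp_neg_mul_rpow (by linarith : -1 < α - 1) one_pos
      (by positivity : 0 < 1 + b * d ^ 2)).congr_fun (fun s _ => ?_) measurableSet_Ioi
    simp only [rpow_one, neg_mul]

theorem rational_quadratic_kernel_posSemidef_general (n : ℕ) (t : Fin n → ℝ) (c : Fin n → ℝ)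
    (σ α ℓ : ℝ) (hα : 0 < α) :
    0 ≤ ∑ i : Fin n, ∑ j : Fin n,
      c i * c j * (σ ^ 2 * (1 + (t i - t j) ^ 2 / (2 * α * ℓ ^ 2)) ^ (-α)) := by
  have h := (isPosSemidefFun_one_add_mul_sq_rpow_neg (b := (2 * α * ℓ ^ 2)⁻¹) (by positivity)
    hα).const_mul (sq_nonneg σ) n t c
  simpa only [div_eq_inv_mul] using h

/-- The rational quadratic kernel `k(s,t) = σ² · (1 + (s−t)²/(2αℓ²))^(−α)` with amplitude
`σ > 0`, shape parameter `α > 0`, and length scale `ℓ > 0` is positive semidefinite. -/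
theorem rational_quadratic_kernel_posSemidef (n : ℕ) (t : Fin n → ℝ) (c : Fin n → ℝ)
    (σ α ℓ : ℝ) (hσ : 0 < σ) (hα : 0 < α) (hℓ : 0 < ℓ) :
    0 ≤ ∑ i : Fin n, ∑ j : Fin n,
      c i * c j * (σ ^ 2 * (1 + (t i - t j) ^ 2 / (2 * α * ℓ ^ 2)) ^ (-α)) :=
  rational_quadratic_kernel_posSemidef_general n t c σ α ℓ hα
end

section
/- Gaussian smoothing of the normal CDF: for all real numbers c, μ, all κ > 0, and all ν ≥ 0, it holds that ∫_ℝ Φ((c − f)/κ) dN(μ, ν²)(f) = Φ((c − μ)/√(κ² + ν²)), where the integral is taken with respect to the Gaussian measure on ℝ with mean μ and variance ν². -/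
/-!
If `X ~ N(0, κ²)` and `Y ~ N(μ, ν²)` are independent, then `Φ((c - f) / κ) = P(X ≤ c - f)`, so
the integral is `P(X + Y ≤ c)`: the mass of `(-∞, c]` under the convolution
`N(μ, ν²) ∗ N(0, κ²) = N(μ, κ² + ν²)`.
-/

open MeasureTheory ProbabilityTheory

/-- `Φ`, the cumulative distribution function of the standard normal distribution. -/
noncomputable def stdNormalCDF (x : ℝ) : ℝ :=
  ((gaussianReal 0 1) (Set.Iic x)).toReal

open scoped NNReal
open Set

theorem MeasureTheory.Measure.conv_apply {M : Type*} [AddMonoid M] [MeasurableSpace M]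
    [MeasurableAdd₂ M] (μ ν : Measure M) [SFinite ν] {s : Set M} (hs : MeasurableSet s) :
    (μ ∗ ν) s = ∫⁻ x, ν ((x + ·) ⁻¹' s) ∂μ := by
  rw [Measure.conv, Measure.map_apply measurable_add hs, Measure.prod_apply (measurable_add hs)]
  rfl

theorem MeasureTheory.Measure.conv_apply_Iic (μ ν : Measure ℝ) [SFinite ν] (c : ℝ) :
    (μ ∗ ν) (Iic c) = ∫⁻ x, ν (Iic (c - x)) ∂μ := by
  simp_rw [Measure.conv_apply μ ν measurableSet_Iic, preimage_const_add_Iic]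

theorem gaussianReal_Iic_toReal (m : ℝ) {v : ℝ≥0} (hv : v ≠ 0) (c : ℝ) :
    (gaussianReal m v (Iic c)).toReal = stdNormalCDF ((c - m) / √v) := by
  have hsqrt : 0 < √(v : ℝ) := Real.sqrt_pos.mpr (by positivity)
  have hstd : (gaussianReal m v).map (fun x ↦ (x - m) / √v) = gaussianReal 0 1 := by
    rw [show (fun x ↦ (x - m) / √v) = (· / √v) ∘ (· - m) from rfl,
      ← Measure.map_map (by fun_prop) (by fun_prop), gaussianReal_map_sub_const,
      gaussianReal_map_div_const, sub_self, zero_div]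
    congr
    ext
    simp [Real.sq_sqrt v.coe_nonneg, div_self (NNReal.coe_ne_zero.mpr hv)]
  have hpre : (fun x ↦ (x - m) / √v) ⁻¹' Iic ((c - m) / √v) = Iic c := by
    ext x
    simp [div_le_div_iff_of_pos_right hsqrt]
  rw [stdNormalCDF, ← hstd, Measure.map_apply (by fun_prop) measurableSet_Iic, hpre]

theorem integral_stdNormalCDF_gaussian_general (c μ κ ν : ℝ) (hκ : 0 < κ) :
    ∫ f, stdNormalCDF ((c - f) / κ) ∂(gaussianReal μ ⟨ν ^ 2, sq_nonneg ν⟩) =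
      stdNormalCDF ((c - μ) / Real.sqrt (κ ^ 2 + ν ^ 2)) := by
  set v : ℝ≥0 := ⟨κ ^ 2, sq_nonneg κ⟩
  set w : ℝ≥0 := ⟨ν ^ 2, sq_nonneg ν⟩
  have hv_coe : (v : ℝ) = κ ^ 2 := rfl
  have hw_coe : (w : ℝ) = ν ^ 2 := rfl
  have hv : v ≠ 0 := by rw [← NNReal.coe_ne_zero, hv_coe]; positivity
  have hwv : w + v ≠ 0 := by simp [hv]
  have hΦ (f : ℝ) : stdNormalCDF ((c - f) / κ) = (gaussianReal 0 v (Iic (c - f))).toReal := by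
    rw [gaussianReal_Iic_toReal 0 hv, sub_zero, hv_coe, Real.sqrt_sq hκ.le]
  have hmeas : Measurable fun f ↦ gaussianReal 0 v (Iic (c - f)) :=
    Antitone.measurable fun a b hab ↦ measure_mono (Iic_subset_Iic.mpr (sub_le_sub_left hab c))
  simp_rw [hΦ]
  rw [integral_toReal hmeas.aemeasurable (ae_of_all _ fun _ ↦ measure_lt_top _ _),
    ← Measure.conv_apply_Iic, gaussianReal_conv_gaussianReal, add_zero,
    gaussianReal_Iic_toReal μ hwv, NNReal.coe_add, hv_coe, hw_coe, add_comm (ν ^ 2)]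

/-- Gaussian smoothing of the normal CDF:
`∫ Φ((c − f)/κ) dN(μ, ν²)(f) = Φ((c − μ)/√(κ² + ν²))` for `κ > 0` and `ν ≥ 0`. -/
theorem integral_stdNormalCDF_gaussian (c μ κ ν : ℝ) (hκ : 0 < κ) (hν : 0 ≤ ν) :
    ∫ f, stdNormalCDF ((c - f) / κ) ∂(gaussianReal μ ⟨ν ^ 2, sq_nonneg ν⟩) =
      stdNormalCDF ((c - μ) / Real.sqrt (κ ^ 2 + ν ^ 2)) :=
  integral_stdNormalCDF_gaussian_general c μ κ ν hκ
end
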